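/- arXiv:1808.01313 — 3 statements merged into one kernel-verified Lean document; each statement's English description precedes it below -/
import Mathlib

section
/- If G is a nontrivial square-complementary graph, then the radius of G equals 3. -/
open SimpleGraph

/-- The square of a graph: two distinct vertices are adjacent iff they are at
distance at most 2 in `G`, i.e. adjacent or having a common neighbor. -/
def SimpleGraph.square {V : Type*} (G : SimpleGraph V) : SimpleGraph V where
  Adj u v := u ≠ v ∧ (G.Adj u v ∨ ∃ w, G.Adj u w ∧ G.Adj w v)
  symm := by
    constructor
    rintro u v ⟨h, h' | ⟨w, hw1, hw2⟩⟩
    · exact ⟨h.symm, Or.inl h'.symm⟩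
    · exact ⟨h.symm, Or.inr ⟨w, hw2.symm, hw1.symm⟩⟩
  loopless := by constructor; rintro v ⟨h, -⟩; exact h rfl

/-- A graph is square-complementary (squco) if its square is isomorphic to its
complement. -/
def SimpleGraph.IsSquco {V : Type*} (G : SimpleGraph V) : Prop :=
  Nonempty (G.square ≃g Gᶜ)

/-- The radius of a graph: the minimum over all vertices `v` of the maximum
distance from `v` to other vertices. -/
noncomputable def SimpleGraph.radiusNat {V : Type*} (G : SimpleGraph V) : ℕ :=
  (⨅ v : V, ⨆ u : V, G.edist v u).toNat

/-! For an isomorphism `φ : G² ≃g Gᶜ`, the vertices `φ u`, `φ v` are adjacent in `G` exactly when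
`u`, `v` are at distance at least `3`. An isolated vertex `a` would make `φ a` adjacent to every
other vertex, which is impossible (look at `a` itself, or at any other vertex if `φ a = a`); so some
neighbour of `φ v` pulls back to a vertex at distance `≥ 3` from `v`, and every eccentricity is at
least `3`. If all eccentricities exceeded `3`, any two vertices `x`, `y` would be at distance `≤ 2`
in `G`: either `d(φ⁻¹x, φ⁻¹y) ≥ 3` and `x ~ y`, or `φ⁻¹x`, `φ⁻¹y` have a common closed neighbour `c`,
and a vertex `w` with `d(c, w) > 3` is at distance `≥ 3` from both, giving `x ~ φ w ~ y`; so the diameter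
would be at most `2`, below those eccentricities. -/

namespace SimpleGraph

variable {V : Type*} {G : SimpleGraph V}

theorem square_adj_iff_edist_le_two {u v : V} :
    G.square.Adj u v ↔ u ≠ v ∧ G.edist u v ≤ 2 := by
  rw [← not_lt, two_lt_edist_iff, Set.eq_empty_iff_forall_notMem]
  simp only [square, mem_commonNeighbors, G.adj_comm v]
  push Not
  tauto

theorem exists_edist_le_one_and_edist_le_one {u v : V} (h : G.edist u v ≤ 2) :
    ∃ w, G.edist u w ≤ 1 ∧ G.edist w v ≤ 1 := by
  by_cases huv : u = v
  · exact ⟨u, by simp [huv]⟩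
  obtain ⟨-, huv | ⟨w, huw, hwv⟩⟩ := square_adj_iff_edist_le_two.2 ⟨huv, h⟩
  · exact ⟨v, (edist_eq_one_iff_adj.2 huv).le, by simp⟩
  · exact ⟨w, (edist_eq_one_iff_adj.2 huw).le, (edist_eq_one_iff_adj.2 hwv).le⟩

theorem adj_iff_two_lt_edist_of_iso (φ : G.square ≃g Gᶜ) {u v : V} :
    G.Adj (φ u) (φ v) ↔ 2 < G.edist u v := by
  by_cases huv : u = v
  · simp [huv]
  have := φ.map_adj_iff (v := u) (w := v)
  rw [compl_adj, square_adj_iff_edist_le_two] at this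
  simp only [ne_eq, EmbeddingLike.apply_eq_iff_eq, huv, not_false_eq_true, true_and] at this
  rw [← not_le, ← this, not_not]

theorem edist_le_two_of_forall_exists_three_lt_edist (φ : G.square ≃g Gᶜ)
    (hfar : ∀ c, ∃ w, 3 < G.edist c w) (x y : V) : G.edist (φ x) (φ y) ≤ 2 := by
  rcases lt_or_ge 2 (G.edist x y) with hxy | hxy
  · exact (edist_eq_one_iff_adj.2 ((adj_iff_two_lt_edist_of_iso φ).2 hxy)).le.trans one_le_two
  obtain ⟨c, hxc, hcy⟩ := exists_edist_le_one_and_edist_le_one hxy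
  obtain ⟨w, hcw⟩ := hfar c
  have hw : ∀ z, G.edist c z ≤ 1 → 2 < G.edist z w := fun z hcz => by
    by_contra! hzw
    have : G.edist c w ≤ 3 := G.edist_triangle.trans <| (add_le_add hcz hzw).trans_eq (by norm_num)
    exact this.not_gt hcw
  have hxw := (adj_iff_two_lt_edist_of_iso φ).2 (hw x (edist_comm ▸ hxc))
  have hwy := (adj_iff_two_lt_edist_of_iso φ).2 (edist_comm ▸ hw y hcy)
  calc G.edist (φ x) (φ y) ≤ G.edist (φ x) (φ w) + G.edist (φ w) (φ y) := G.edist_triangle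
    _ = 2 := by rw [edist_eq_one_iff_adj.2 hxw, edist_eq_one_iff_adj.2 hwy, one_add_one_eq_two]

namespace IsSquco

theorem exists_adj [Nontrivial V] (h : G.IsSquco) (a : V) : ∃ z, G.Adj a z := by
  obtain ⟨φ⟩ := h
  by_contra! ha
  have huniv : ∀ z ≠ φ a, G.Adj (φ a) z := fun z hz => by
    have hza : φ.symm z ≠ a := fun h => hz (by rw [← h, RelIso.apply_symm_apply])
    simpa using (adj_iff_two_lt_edist_of_iso φ).2 <| two_lt_edist_iff.2
      ⟨hza.symm, ha _, Set.eq_empty_of_forall_notMem fun w hw => ha w hw.1⟩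
  rcases eq_or_ne (φ a) a with hfix | hmove
  · obtain ⟨z, hz⟩ := exists_ne a
    have := huniv z (by rwa [hfix])
    rw [hfix] at this
    exact ha z this
  · exact ha _ (huniv a hmove.symm).symm

theorem three_le_eccent [Nontrivial V] (h : G.IsSquco) (v : V) : 3 ≤ G.eccent v := by
  have ⟨φ⟩ := h
  obtain ⟨z, hz⟩ := h.exists_adj (φ v)
  have hfar : 2 < G.edist v (φ.symm z) := (adj_iff_two_lt_edist_of_iso φ).1 (by simpa using hz)
  exact (Order.add_one_le_of_lt hfar).trans edist_le_eccent

theorem exists_eccent_le_three [Nonempty V] (h : G.IsSquco) : ∃ v, G.eccent v ≤ 3 := by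
  obtain ⟨φ⟩ := h
  by_contra! hecc
  have hfar : ∀ c, ∃ w, 3 < G.edist c w := fun c => by
    simpa [eccent_le_iff] using (hecc c).not_ge
  have hdiam : G.ediam ≤ 2 := ediam_le_iff.2 fun x y => by
    simpa using edist_le_two_of_forall_exists_three_lt_edist φ hfar (φ.symm x) (φ.symm y)
  obtain ⟨v⟩ := ‹Nonempty V›
  exact ((hecc v).trans_le eccent_le_ediam).not_ge (hdiam.trans (by norm_num))

theorem radius_eq_three [Nontrivial V] (h : G.IsSquco) : G.radius = 3 :=
  le_antisymm (h.exists_eccent_le_three.elim fun _ hv => radius_le_eccent.trans hv)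
    (le_iInf h.three_le_eccent)

end IsSquco

end SimpleGraph

theorem isSquco_radius_eq_three_general {V : Type*} [Nontrivial V]
    (G : SimpleGraph V) (h : G.IsSquco) : G.radiusNat = 3 := by
  rw [radiusNat, ← radius_eq_iInf_iSup_edist, h.radius_eq_three]
  rfl

/-- A nontrivial square-complementary graph has radius 3. -/
theorem isSquco_radius_eq_three {V : Type*} [Fintype V] [Nontrivial V]
    (G : SimpleGraph V) (h : G.IsSquco) : G.radiusNat = 3 :=
  isSquco_radius_eq_three_general G h
end

section
/- If G is a bipartite square-complementary graph with bipartition {A,B}, then every two distinct vertices in A have a common neighbor (which lies in B). -/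
open SimpleGraph

/-- `{A, B}` is a bipartition of `G`: the two sets partition the vertex set and
every edge of `G` joins a vertex of `A` to a vertex of `B`. -/
def SimpleGraph.IsBipartitionOf {V : Type*} (G : SimpleGraph V) (A B : Set V) : Prop :=
  (∀ v, v ∈ A ↔ v ∉ B) ∧ ∀ ⦃u v⦄, G.Adj u v → (u ∈ A ∧ v ∈ B) ∨ (u ∈ B ∧ v ∈ A)

/-!
Let `H := G.squareᶜ`, the graph joining vertices at distance `≥ 3`. From `G.square ≅ Gᶜ` we get
`H ≅ G`, hence `H.squareᶜ ≅ H ≅ G`, so `H` and `H.squareᶜ` are bipartite as well. Moreover `G`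
has no isolated vertex (it would be dominating in `H`), so no vertex of `H` is adjacent to a whole
side of `H` (it would then be within distance `2` of everything in `H`).

If `x, y ∈ A` had no common neighbour, they would be adjacent in `H`, hence on opposite sides
`x ∈ X`, `y ∈ Y` of `H`, and every `b ∈ B` is adjacent to `x` or `y`. If all `a ∈ A ∩ X` have
`N(a) ⊆ N(x)`, then `y` is `H`-adjacent to all of `X`; symmetrically for `A ∩ Y`. Otherwise there
are `a₁ ∈ A ∩ X` with a neighbour `c₂ ∉ N(x)` and `a₂ ∈ A ∩ Y` with a neighbour `c₁ ∉ N(y)`, and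
`a₁, a₂, c₁` form a triangle in `H.squareᶜ`.
-/

namespace SimpleGraph

variable {V W : Type*} {G : SimpleGraph V} {G' : SimpleGraph W} {u v w : V}

lemma square_adj : G.square.Adj u v ↔ u ≠ v ∧ (G.Adj u v ∨ ∃ w, G.Adj u w ∧ G.Adj w v) :=
  Iff.rfl

lemma compl_square_adj :
    G.squareᶜ.Adj u v ↔ u ≠ v ∧ ¬G.Adj u v ∧ ∀ w, G.Adj u w → ¬G.Adj w v := by
  simp only [compl_adj, square_adj, not_and, not_or, not_exists]
  tauto

def Iso.square (f : G ≃g G') : G.square ≃g G'.square where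
  toEquiv := f.toEquiv
  map_rel_iff' := by simp [square_adj, f.surjective.exists, f.map_adj_iff]

def Iso.compl (f : G ≃g G') : Gᶜ ≃g G'ᶜ where
  toEquiv := f.toEquiv
  map_rel_iff' := by simp [compl_adj, f.map_adj_iff]

lemma IsSquco.nonempty_compl_square_iso (h : G.IsSquco) : Nonempty (G.squareᶜ ≃g G) := by
  obtain ⟨φ⟩ := h
  have ψ := φ.compl
  rw [compl_compl] at ψ
  exact ⟨ψ⟩

namespace IsBipartitionOf

variable {A B : Set V} (hG : G.IsBipartitionOf A B)
include hG

lemma symm : G.IsBipartitionOf B A :=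
  ⟨fun v => by rw [hG.1 v, not_not], fun _ _ huv => (hG.2 huv).symm⟩

lemma notMem_right (hu : u ∈ A) : u ∉ B :=
  (hG.1 u).mp hu

lemma mem_left_of_notMem_right (hu : u ∉ B) : u ∈ A :=
  (hG.1 u).mpr hu

lemma mem_right_of_adj (hu : u ∈ A) (huv : G.Adj u v) : v ∈ B :=
  (hG.2 huv).elim And.right fun h => absurd h.1 (hG.notMem_right hu)

lemma not_adj_of_mem_left (hu : u ∈ A) (hv : v ∈ A) : ¬G.Adj u v :=
  fun huv => hG.notMem_right hv (hG.mem_right_of_adj hu huv)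

lemma not_adj_of_adj_of_adj (huv : G.Adj u v) (hvw : G.Adj v w) : ¬G.Adj u w := by
  rcases hG.2 huv with ⟨hu, hv⟩ | ⟨hu, hv⟩
  · exact hG.not_adj_of_mem_left hu (hG.symm.mem_right_of_adj hv hvw)
  · exact hG.symm.not_adj_of_mem_left hu (hG.mem_right_of_adj hv hvw)

/-- Vertices on opposite sides are at odd distance. -/
lemma compl_square_adj_of_not_adj (hu : u ∈ A) (hv : v ∈ B) (huv : ¬G.Adj u v) :
    G.squareᶜ.Adj u v := by
  refine compl_square_adj.mpr ⟨?_, huv, fun w huw hwv => ?_⟩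
  · rintro rfl
    exact hG.notMem_right hu hv
  · exact hG.notMem_right (hG.symm.mem_right_of_adj (hG.mem_right_of_adj hu huw) hwv) hv

lemma comap (f : G' →g G) : G'.IsBipartitionOf (f ⁻¹' A) (f ⁻¹' B) :=
  ⟨fun v => hG.1 (f v), fun _ _ huv => hG.2 (f.map_adj huv)⟩

end IsBipartitionOf

section SquareComplementIso

variable [Nontrivial V]

lemma exists_adj_of_compl_square_iso (ψ : G.squareᶜ ≃g G) (v : V) : ∃ w, G.Adj v w := by
  by_contra! hv
  -- An isolated `v` is far from every other vertex, so `ψ v` is adjacent to all of them.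
  have far : ∀ u, u ≠ v → G.Adj (ψ v) (ψ u) := fun u hu =>
    ψ.map_adj_iff.mpr (compl_square_adj.mpr ⟨hu.symm, hv u, fun w hvw => (hv w hvw).elim⟩)
  by_cases hfix : ψ v = v
  · obtain ⟨u, hu⟩ := exists_ne v
    exact hv _ (hfix ▸ far u hu)
  · have hne : ψ.symm v ≠ v := fun h => hfix (by rw [← h, ψ.apply_symm_apply, h])
    exact hv _ (by simpa using (far _ hne).symm)

lemma exists_compl_square_adj_of_iso (ψ : G.squareᶜ ≃g G) (v : V) : ∃ w, G.squareᶜ.Adj v w := by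
  obtain ⟨w, hw⟩ := exists_adj_of_compl_square_iso ψ (ψ v)
  exact ⟨ψ.symm w, ψ.map_adj_iff.mp (by rwa [ψ.apply_symm_apply])⟩

lemma IsBipartitionOf.not_forall_adj_of_compl_square_iso {A B : Set V}
    (hG : G.IsBipartitionOf A B) (ψ : G.squareᶜ ≃g G) (v : V) : ¬∀ a ∈ A, G.Adj v a := by
  intro hv
  obtain ⟨u, hvu⟩ := exists_compl_square_adj_of_iso ψ v
  obtain ⟨-, hnadj, hnpath⟩ := compl_square_adj.mp hvu
  by_cases hu : u ∈ A
  · exact hnadj (hv u hu)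
  · obtain ⟨a, hua⟩ := exists_adj_of_compl_square_iso ψ u
    have ha : a ∈ A := hG.symm.mem_right_of_adj (hG.symm.mem_left_of_notMem_right hu) hua
    exact hnpath a (hv a ha) hua.symm

end SquareComplementIso

section CommonNeighbor

variable {A B X Y : Set V} {x y : V}

lemma adj_or_adj_of_mem_compl_square_sides (hG : G.IsBipartitionOf A B)
    (hH : G.squareᶜ.IsBipartitionOf X Y) {a a' b : V} (ha : a ∈ A) (ha' : a' ∈ A)
    (haX : a ∈ X) (ha'Y : a' ∈ Y) (hb : b ∈ B) : G.Adj a b ∨ G.Adj a' b := by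
  by_contra! h
  have hbY := hH.mem_right_of_adj haX (hG.compl_square_adj_of_not_adj ha hb h.1)
  have hbX := hH.symm.mem_right_of_adj ha'Y (hG.compl_square_adj_of_not_adj ha' hb h.2)
  exact hH.notMem_right hbX hbY

lemma forall_compl_square_adj_of_neighbors_subset (hG : G.IsBipartitionOf A B)
    (hH : G.squareᶜ.IsBipartitionOf X Y) (hx : x ∈ A) (hy : y ∈ A) (hxX : x ∈ X)
    (hyY : y ∈ Y) (hxy : ∀ w, G.Adj x w → ¬G.Adj y w)
    (hsub : ∀ a ∈ A, a ∈ X → ∀ b, G.Adj a b → G.Adj x b) :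
    ∀ v ∈ X, G.squareᶜ.Adj y v := by
  intro v hvX
  by_cases hvB : v ∈ B
  · refine hG.compl_square_adj_of_not_adj hy hvB fun hyv => ?_
    have hxv : ¬G.Adj x v := fun hxv => hxy v hxv hyv
    exact hH.notMem_right hvX
      (hH.mem_right_of_adj hxX (hG.compl_square_adj_of_not_adj hx hvB hxv))
  · have hvA := hG.mem_left_of_notMem_right hvB
    refine compl_square_adj.mpr ⟨?_, hG.not_adj_of_mem_left hy hvA,
      fun w hyw hwv => hxy w (hsub v hvA hvX w hwv.symm) hyw⟩
    rintro rfl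
    exact hH.notMem_right hvX hyY

lemma not_compl_square_adj_of_adj_of_not_adj (hG : G.IsBipartitionOf A B)
    (hH : G.squareᶜ.IsBipartitionOf X Y) (hx : x ∈ A) (hxX : x ∈ X) {a c t : V}
    (ha : a ∈ A) (haX : a ∈ X) (hac : G.Adj a c) (hxc : ¬G.Adj x c) (ht : t ∈ A) :
    ¬G.squareᶜ.Adj a t := by
  intro hat
  have htY := hH.mem_right_of_adj haX hat
  have htc := (adj_or_adj_of_mem_compl_square_sides hG hH hx ht hxX htY
    (hG.mem_right_of_adj ha hac)).resolve_left hxc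
  exact (compl_square_adj.mp hat).2.2 c hac htc.symm

lemma false_of_adj_of_not_adj_of_adj_of_not_adj (hG : G.IsBipartitionOf A B)
    (hH : G.squareᶜ.IsBipartitionOf X Y) (ψ : G.squareᶜ.squareᶜ ≃g G.squareᶜ) (hx : x ∈ A)
    (hy : y ∈ A) (hxX : x ∈ X) (hyY : y ∈ Y) {a₁ a₂ c₁ c₂ : V} (ha₁ : a₁ ∈ A) (ha₁X : a₁ ∈ X)
    (ha₁c₂ : G.Adj a₁ c₂) (hxc₂ : ¬G.Adj x c₂) (ha₂ : a₂ ∈ A) (ha₂Y : a₂ ∈ Y)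
    (ha₂c₁ : G.Adj a₂ c₁) (hyc₁ : ¬G.Adj y c₁) : False := by
  have hc₁ := hG.mem_right_of_adj ha₂ ha₂c₁
  have hc₁X := hH.symm.mem_right_of_adj hyY (hG.compl_square_adj_of_not_adj hy hc₁ hyc₁)
  have ha₁c₁ :=
    (adj_or_adj_of_mem_compl_square_sides hG hH ha₁ hy ha₁X hyY hc₁).resolve_right hyc₁
  have hfar₁ : ∀ t ∈ A, ¬G.squareᶜ.Adj a₁ t := fun t ht =>
    not_compl_square_adj_of_adj_of_not_adj hG hH hx hxX ha₁ ha₁X ha₁c₂ hxc₂ ht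
  have h₁₂ : G.squareᶜ.squareᶜ.Adj a₁ a₂ :=
    hH.compl_square_adj_of_not_adj ha₁X ha₂Y (hfar₁ a₂ ha₂)
  have h₂₁ : G.squareᶜ.squareᶜ.Adj c₁ a₂ :=
    hH.compl_square_adj_of_not_adj hc₁X ha₂Y fun h => (compl_square_adj.mp h).2.1 ha₂c₁.symm
  have h₁₁ : G.squareᶜ.squareᶜ.Adj a₁ c₁ := by
    refine compl_square_adj.mpr ⟨?_, fun h => (compl_square_adj.mp h).2.1 ha₁c₁, fun t h₁ h₂ => ?_⟩
    · rintro rfl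
      exact hG.notMem_right ha₁ hc₁
    by_cases ht : t ∈ B
    · have ha₂t := (adj_or_adj_of_mem_compl_square_sides hG hH ha₁ ha₂ ha₁X ha₂Y ht).resolve_left
        (compl_square_adj.mp h₁).2.1
      exact (compl_square_adj.mp h₂).2.2 a₂ ha₂t.symm ha₂c₁
    · exact hfar₁ t (hG.mem_left_of_notMem_right ht) h₁
  exact (hH.comap ψ.toHom).not_adj_of_adj_of_adj h₁₂ h₂₁.symm h₁₁

lemma false_of_not_exists_common_adj [Nontrivial V] (hG : G.IsBipartitionOf A B)
    (hH : G.squareᶜ.IsBipartitionOf X Y) (ψ : G.squareᶜ.squareᶜ ≃g G.squareᶜ) (hx : x ∈ A)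
    (hy : y ∈ A) (hxX : x ∈ X) (hyY : y ∈ Y) (hxy : ∀ w, G.Adj x w → ¬G.Adj y w) : False := by
  by_cases h₁ : ∀ a ∈ A, a ∈ X → ∀ b, G.Adj a b → G.Adj x b
  · exact hH.not_forall_adj_of_compl_square_iso ψ y
      (forall_compl_square_adj_of_neighbors_subset hG hH hx hy hxX hyY hxy h₁)
  by_cases h₂ : ∀ a ∈ A, a ∈ Y → ∀ b, G.Adj a b → G.Adj y b
  · exact hH.symm.not_forall_adj_of_compl_square_iso ψ x
      (forall_compl_square_adj_of_neighbors_subset hG hH.symm hy hx hyY hxX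
        (fun w hyw hxw => hxy w hxw hyw) h₂)
  push Not at h₁ h₂
  obtain ⟨a₁, ha₁, ha₁X, c₂, ha₁c₂, hxc₂⟩ := h₁
  obtain ⟨a₂, ha₂, ha₂Y, c₁, ha₂c₁, hyc₁⟩ := h₂
  exact false_of_adj_of_not_adj_of_adj_of_not_adj hG hH ψ hx hy hxX hyY ha₁ ha₁X ha₁c₂ hxc₂
    ha₂ ha₂Y ha₂c₁ hyc₁

end CommonNeighbor

end SimpleGraph

theorem isSquco_bipartite_common_neighbor_general {V : Type*} (G : SimpleGraph V)
    {A B : Set V} (hbip : G.IsBipartitionOf A B) (h : G.IsSquco) :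
    ∀ a₁ ∈ A, ∀ a₂ ∈ A, a₁ ≠ a₂ → ∃ b ∈ B, G.Adj a₁ b ∧ G.Adj a₂ b := by
  intro x hx y hy hne
  by_contra! hcommon
  have : Nontrivial V := ⟨x, y, hne⟩
  have hxy : ∀ w, G.Adj x w → ¬G.Adj y w := fun w hxw =>
    hcommon w (hbip.mem_right_of_adj hx hxw) hxw
  obtain ⟨ψ⟩ := h.nonempty_compl_square_iso
  have hH := hbip.comap ψ.toHom
  have hfar : G.squareᶜ.Adj x y := compl_square_adj.mpr
    ⟨hne, hbip.not_adj_of_mem_left hx hy, fun w hxw hwy => hxy w hxw hwy.symm⟩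
  rcases hH.2 hfar with ⟨hxX, hyY⟩ | ⟨hxY, hyX⟩
  · exact false_of_not_exists_common_adj hbip hH ψ.square.compl hx hy hxX hyY hxy
  · exact false_of_not_exists_common_adj hbip hH.symm ψ.square.compl hx hy hxY hyX hxy

/-- In a bipartite square-complementary graph with bipartition `{A, B}`, every
two distinct vertices of `A` have a common neighbor, which lies in `B`. -/
theorem isSquco_bipartite_common_neighbor {V : Type*} [Fintype V] (G : SimpleGraph V)
    {A B : Set V} (hbip : G.IsBipartitionOf A B) (h : G.IsSquco) :
    ∀ a₁ ∈ A, ∀ a₂ ∈ A, a₁ ≠ a₂ → ∃ b ∈ B, G.Adj a₁ b ∧ G.Adj a₂ b :=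
  isSquco_bipartite_common_neighbor_general G hbip h
end

section
/- There is no cubic (3-regular) bipartite planar square-complementary graph on 12 vertices. -/
open SimpleGraph

/-- An embedding of a subdivision of `H` into `G`: branch vertices are mapped
injectively into `G`, each edge of `H` corresponds to a path in `G` between the
images of its endpoints, these paths contain no branch vertices in their
interior, and paths corresponding to distinct edges are internally disjoint. -/
structure SimpleGraph.SubdivEmbedding {U W : Type*} (H : SimpleGraph U) (G : SimpleGraph W) where
  vmap : U ↪ W
  walk : ∀ ⦃u v : U⦄, H.Adj u v → G.Walk (vmap u) (vmap v)
  walk_isPath : ∀ ⦃u v : U⦄ (h : H.Adj u v), (walk h).IsPath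
  branch_mem_support : ∀ ⦃u v : U⦄ (h : H.Adj u v) (w : U),
    vmap w ∈ (walk h).support → w = u ∨ w = v
  internally_disjoint : ∀ ⦃u v u' v' : U⦄ (h : H.Adj u v) (h' : H.Adj u' v'),
    ({u, v} : Set U) ≠ {u', v'} →
    ∀ x, x ∈ (walk h).support → x ∈ (walk h').support →
      ∃ w, x = vmap w ∧ w ∈ ({u, v} : Set U) ∩ {u', v'}

/-- `G` contains a subdivision of `H`. -/
def SimpleGraph.ContainsSubdivisionOf {U W : Type*} (G : SimpleGraph W) (H : SimpleGraph U) :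
    Prop :=
  Nonempty (H.SubdivEmbedding G)

/-- Planarity, via Kuratowski's characterization: a graph is planar iff it
contains no subdivision of `K₅` and no subdivision of `K₃,₃`. -/
def SimpleGraph.IsPlanar {W : Type*} (G : SimpleGraph W) : Prop :=
  ¬ G.ContainsSubdivisionOf (completeGraph (Fin 5)) ∧
  ¬ G.ContainsSubdivisionOf (completeBipartiteGraph (Fin 3) (Fin 3))


/-!
Since `G²` is isomorphic to the complement of a cubic graph on 12 vertices, it is 8-regular, so
every vertex has five vertices at distance two. Bipartite graphs have no triangles, so these five
vertices are reached by `3 · 2 = 6` paths of length two: exactly one of them is reached twice, that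
is, every vertex lies on exactly one 4-cycle. The three resulting 4-cycles partition the vertices,
and each vertex has a single neighbour outside its own 4-cycle. Two adjacent vertices of a 4-cycle
cannot send their outer edges to one other 4-cycle (this would create a second 4-cycle or an odd
cycle), which forces the outer edges into the pattern of the Franklin graph; this graph contains a
subdivision of `K₃,₃`.
-/

open Finset

theorem ZMod.eq_zero_or_one_or_two_or_three (k : ZMod 4) : k = 0 ∨ k = 1 ∨ k = 2 ∨ k = 3 := by
  revert k; decide

theorem ZMod.range_four {α : Type*} (q : ZMod 4 → α) : Set.range q = {q 0, q 1, q 2, q 3} := by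
  ext v
  constructor
  · rintro ⟨k, rfl⟩
    obtain rfl | rfl | rfl | rfl := ZMod.eq_zero_or_one_or_two_or_three k <;> simp
  · rintro (rfl | rfl | rfl | rfl) <;> exact Set.mem_range_self _

theorem Finset.exists_eq_two_of_sum_eq_card_add_one {ι : Type*} {s : Finset ι} {f : ι → ℕ}
    (h1 : ∀ i ∈ s, 1 ≤ f i) (hsum : ∑ i ∈ s, f i = #s + 1) :
    ∃ i ∈ s, f i = 2 ∧ ∀ j ∈ s, j ≠ i → f j = 1 := by
  have hexcess : ∑ i ∈ s, (f i - 1) = 1 := by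
    rw [sum_tsub_distrib s h1, hsum]; simp
  obtain ⟨i, hi, hne⟩ := exists_ne_zero_of_sum_ne_zero (hexcess ▸ one_ne_zero)
  refine ⟨i, hi, ?_, fun j hj hji => ?_⟩
  · have := single_le_sum (fun j _ => Nat.zero_le (f j - 1)) hi
    have := h1 i hi
    omega
  · have := add_le_sum (fun j _ => Nat.zero_le (f j - 1)) hi hj hji.symm
    have := h1 j hj
    omega

namespace SimpleGraph
variable {V : Type*} {G : SimpleGraph V}

theorem CliqueFree.not_adj_of_adj_of_adj (h : G.CliqueFree 3) {v a b : V} (ha : G.Adj v a)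
    (hb : G.Adj v b) : ¬G.Adj a b :=
  fun hab => isIndepSet_neighborSet_of_triangleFree G h v ha hb hab.ne hab

theorem Coloring.cliqueFree_three (C : G.Coloring Bool) : G.CliqueFree 3 :=
  C.colorable.cliqueFree (by simp)

section DistanceTwo
variable [Fintype V] [DecidableRel G.Adj] [DecidableEq V]

variable (G) in
def distTwoFinset (v : V) : Finset V :=
  {u | u ≠ v ∧ ¬G.Adj v u ∧ ∃ w, G.Adj v w ∧ G.Adj w u}

theorem mem_distTwoFinset {v u : V} :
    u ∈ G.distTwoFinset v ↔ u ≠ v ∧ ¬G.Adj v u ∧ ∃ w, G.Adj v w ∧ G.Adj w u := by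
  simp [distTwoFinset]

theorem ncard_square_neighborSet (v : V) :
    (G.square.neighborSet v).ncard = G.degree v + #(G.distTwoFinset v) := by
  have hsplit : G.square.neighborSet v = ↑(G.neighborFinset v ∪ G.distTwoFinset v) := by
    ext u
    by_cases h : G.Adj v u
    · simp [square, h, h.ne]
    · simp [square, mem_distTwoFinset, h, ne_comm]
  have hdisj : Disjoint (G.neighborFinset v) (G.distTwoFinset v) :=
    Finset.disjoint_left.2 fun u hN hS => (mem_distTwoFinset.1 hS).2.1 (by simpa using hN)
  rw [hsplit, Set.ncard_coe_finset, card_union_of_disjoint hdisj, card_neighborFinset_eq_degree]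

theorem sum_card_inter_neighborFinset_distTwoFinset (htri : G.CliqueFree 3) (v : V) :
    ∑ u ∈ G.distTwoFinset v, #(G.neighborFinset v ∩ G.neighborFinset u) =
      ∑ n ∈ G.neighborFinset v, (G.degree n - 1) := by
  have hfiber : ∀ n ∈ G.neighborFinset v, (G.distTwoFinset v).bipartiteBelow
      (fun u n => G.Adj u n) n = (G.neighborFinset n).erase v := by
    intro n hn
    rw [mem_neighborFinset] at hn
    ext u
    simp only [bipartiteBelow, mem_filter, mem_distTwoFinset, mem_erase, mem_neighborFinset]
    constructor
    · rintro ⟨⟨huv, -⟩, hun⟩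
      exact ⟨huv, hun.symm⟩
    · rintro ⟨huv, hnu⟩
      exact ⟨⟨huv, fun hvu => htri.not_adj_of_adj_of_adj hn hvu hnu, n, hn, hnu⟩, hnu.symm⟩
  calc ∑ u ∈ G.distTwoFinset v, #(G.neighborFinset v ∩ G.neighborFinset u)
      = ∑ u ∈ G.distTwoFinset v,
          #((G.neighborFinset v).bipartiteAbove (fun u n => G.Adj u n) u) := by
        refine sum_congr rfl fun u _ => congrArg card ?_
        ext n; simp [bipartiteAbove]
    _ = ∑ n ∈ G.neighborFinset v,
          #((G.distTwoFinset v).bipartiteBelow (fun u n => G.Adj u n) n) :=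
        sum_card_bipartiteAbove_eq_sum_card_bipartiteBelow _
    _ = ∑ n ∈ G.neighborFinset v, (G.degree n - 1) := by
        refine sum_congr rfl fun n hn => ?_
        rw [hfiber n hn, card_erase_of_mem (by simpa using ((mem_neighborFinset _ _ _).1 hn).symm),
          card_neighborFinset_eq_degree]

/-- The `d(d-1) - 1` vertices at distance two from `v` are reached by `d(d-1)` paths of length
two, so exactly one of them is reached twice. -/
theorem exists_card_inter_neighborFinset_eq_two {d : ℕ} (hreg : G.IsRegularOfDegree d)
    (htri : G.CliqueFree 3) {v : V} (hsq : (G.square.neighborSet v).ncard + 1 = d * d) :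
    ∃ u ≠ v, #(G.neighborFinset v ∩ G.neighborFinset u) = 2 ∧
      ∀ w ≠ v, 2 ≤ #(G.neighborFinset v ∩ G.neighborFinset w) → w = u := by
  have hsum : ∑ u ∈ G.distTwoFinset v, #(G.neighborFinset v ∩ G.neighborFinset u) =
      #(G.distTwoFinset v) + 1 := by
    rw [sum_card_inter_neighborFinset_distTwoFinset htri, sum_congr rfl fun n _ => by rw [hreg n],
      sum_const, card_neighborFinset_eq_degree, hreg v, smul_eq_mul, Nat.mul_sub_one]
    rw [ncard_square_neighborSet, hreg v] at hsq
    omega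
  have hpos : ∀ u ∈ G.distTwoFinset v, 1 ≤ #(G.neighborFinset v ∩ G.neighborFinset u) := by
    intro u hu
    obtain ⟨-, -, w, hvw, hwu⟩ := mem_distTwoFinset.1 hu
    exact card_pos.2 ⟨w, by simp [hvw, hwu.symm]⟩
  obtain ⟨u, huS, hu2, hu1⟩ := exists_eq_two_of_sum_eq_card_add_one hpos hsum
  refine ⟨u, (mem_distTwoFinset.1 huS).1, hu2, fun w hwv hw => ?_⟩
  have hwS : w ∈ G.distTwoFinset v := by
    obtain ⟨a, ha, -⟩ := one_lt_card.1 hw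
    simp only [mem_inter, mem_neighborFinset] at ha
    exact mem_distTwoFinset.2
      ⟨hwv, fun hvw => htri.not_adj_of_adj_of_adj ha.1 hvw ha.2.symm, a, ha.1, ha.2.symm⟩
  by_contra hwu
  have := hu1 w hwS hwu
  omega

end DistanceTwo

def IsFourCycle (G : SimpleGraph V) (q : ZMod 4 → V) : Prop :=
  Function.Injective q ∧ ∀ k, G.Adj (q k) (q (k + 1))

theorem isFourCycle_of_adj {a b c d : V} (hab : G.Adj a b) (hbc : G.Adj b c) (hcd : G.Adj c d)
    (hda : G.Adj d a) (hac : a ≠ c) (hbd : b ≠ d) : G.IsFourCycle ![a, b, c, d] := by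
  refine ⟨fun i j hij => ?_, fun k => ?_⟩
  · have := hab.ne; have := hbc.ne; have := hcd.ne; have := hda.ne
    fin_cases i <;> fin_cases j <;> first | rfl | simp_all [eq_comm]
  · fin_cases k
    exacts [hab, hbc, hcd, hda]

namespace IsFourCycle
variable {q : ZMod 4 → V}

theorem comp_add (hq : G.IsFourCycle q) (j : ZMod 4) : G.IsFourCycle (fun k => q (k + j)) :=
  ⟨hq.1.comp (add_left_injective j), fun k => by simpa [add_right_comm] using hq.2 (k + j)⟩

theorem comp_neg (hq : G.IsFourCycle q) : G.IsFourCycle (fun k => q (-k)) :=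
  ⟨hq.1.comp neg_injective, fun k => by simpa [neg_add_eq_sub] using (hq.2 (-k - 1)).symm⟩

theorem adj_of_ne_of_ne_add_two (hq : G.IsFourCycle q) {i j : ZMod 4} (hij : i ≠ j)
    (hopp : j ≠ i + 2) : G.Adj (q i) (q j) := by
  obtain rfl | rfl : j = i + 1 ∨ i = j + 1 := by revert i j; decide
  exacts [hq.2 i, (hq.2 j).symm]

theorem coloring_eq_of_not_adj (hq : G.IsFourCycle q) (C : G.Coloring Bool) {i j : ZMod 4}
    (hne : q i ≠ q j) (hnadj : ¬G.Adj (q i) (q j)) : C (q i) = C (q j) := by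
  obtain rfl : j = i + 2 := by
    by_contra hopp
    exact hnadj (hq.adj_of_ne_of_ne_add_two (fun h => hne (congrArg q h)) hopp)
  have h1 := C.valid (hq.2 i)
  have h2 := C.valid (hq.2 (i + 1))
  rw [add_assoc, one_add_one_eq_two] at h2
  revert h1 h2; cases C (q i) <;> cases C (q (i + 1)) <;> cases C (q (i + 2)) <;> simp

end IsFourCycle

def HasUniqueFourCycles (G : SimpleGraph V) : Prop :=
  ∀ v, ∃ q, G.IsFourCycle q ∧ q 0 = v ∧
    ∀ p, G.IsFourCycle p → v ∈ Set.range p → Set.range p = Set.range q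

theorem hasUniqueFourCycles_of_ncard_square_neighborSet [Fintype V] [DecidableRel G.Adj]
    [DecidableEq V] {d : ℕ} (hreg : G.IsRegularOfDegree d) (htri : G.CliqueFree 3)
    (hsq : ∀ v, (G.square.neighborSet v).ncard + 1 = d * d) : G.HasUniqueFourCycles := by
  intro v
  obtain ⟨u, huv, hu2, huniq⟩ := exists_card_inter_neighborFinset_eq_two hreg htri (hsq v)
  obtain ⟨a, b, hab, hN⟩ := card_eq_two.1 hu2
  have common : ∀ w, G.Adj v w ∧ G.Adj u w ↔ w = a ∨ w = b := fun w => by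
    simpa using congrArg (w ∈ ·) hN
  obtain ⟨hva, hua⟩ := (common a).2 (.inl rfl)
  obtain ⟨hvb, hub⟩ := (common b).2 (.inr rfl)
  refine ⟨![v, a, u, b], isFourCycle_of_adj hva hua.symm hub hvb.symm huv.symm hab, rfl,
    fun p hp ⟨k, hk⟩ => ?_⟩
  set p' : ZMod 4 → V := fun i => p (i + k)
  have hp' : G.IsFourCycle p' := hp.comp_add k
  have hp'0 : p' 0 = v := by simp [p', hk]
  have h1 : G.Adj v (p' 1) ∧ G.Adj (p' 2) (p' 1) := ⟨hp'0 ▸ hp'.2 0, (hp'.2 1).symm⟩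
  have h3 : G.Adj v (p' 3) ∧ G.Adj (p' 2) (p' 3) := ⟨hp'0 ▸ (hp'.2 3).symm, hp'.2 2⟩
  have h2 : p' 2 = u := huniq _ (hp'0 ▸ hp'.1.ne (by decide)) <| one_lt_card.2
    ⟨p' 1, by simpa using h1, p' 3, by simpa using h3, hp'.1.ne (by decide)⟩
  rw [h2] at h1 h3
  rw [← (Equiv.addRight k).surjective.range_comp p]
  change Set.range p' = _
  have hq : Set.range (![v, a, u, b] : ZMod 4 → V) = {v, a, u, b} := ZMod.range_four _
  refine Eq.trans ?_ hq.symm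
  rw [ZMod.range_four, hp'0, h2]
  rcases (common _).1 h1 with e1 | e1 <;> rcases (common _).1 h3 with e3 | e3
  · exact absurd (e1.trans e3.symm) (hp'.1.ne (by decide))
  · rw [e1, e3]
  · rw [e1, e3, Set.insert_comm b u, Set.pair_comm b a, Set.insert_comm u a]
  · exact absurd (e1.trans e3.symm) (hp'.1.ne (by decide))

namespace HasUniqueFourCycles
variable (hU : G.HasUniqueFourCycles)

noncomputable def cycle (v : V) : ZMod 4 → V := (hU v).choose

def block (v : V) : Set V := Set.range (hU.cycle v)

theorem isFourCycle_cycle (v : V) : G.IsFourCycle (hU.cycle v) := (hU v).choose_spec.1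

theorem cycle_zero (v : V) : hU.cycle v 0 = v := (hU v).choose_spec.2.1

theorem range_eq_block {p : ZMod 4 → V} (hp : G.IsFourCycle p) {v : V} (hv : v ∈ Set.range p) :
    Set.range p = hU.block v :=
  (hU v).choose_spec.2.2 p hp hv

theorem mem_block_self (v : V) : v ∈ hU.block v := ⟨0, hU.cycle_zero v⟩

theorem mem_block_of_isFourCycle {q : ZMod 4 → V} (hq : G.IsFourCycle q) (i j : ZMod 4) :
    q j ∈ hU.block (q i) :=
  hU.range_eq_block hq ⟨i, rfl⟩ ▸ ⟨j, rfl⟩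

theorem block_eq_of_mem {v w : V} (h : w ∈ hU.block v) : hU.block w = hU.block v :=
  (hU.range_eq_block (hU.isFourCycle_cycle v) h).symm

theorem disjoint_block_of_ne {v w : V} (h : hU.block v ≠ hU.block w) :
    Disjoint (hU.block v) (hU.block w) :=
  Set.disjoint_left.2 fun _ hv hw => h ((hU.block_eq_of_mem hv).symm.trans (hU.block_eq_of_mem hw))

theorem disjoint_range_of_block_ne {p q : ZMod 4 → V} (hp : G.IsFourCycle p)
    (hq : G.IsFourCycle q) (h : hU.block (p 0) ≠ hU.block (q 0)) :
    Disjoint (Set.range p) (Set.range q) := by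
  rw [hU.range_eq_block hp ⟨0, rfl⟩, hU.range_eq_block hq ⟨0, rfl⟩]
  exact hU.disjoint_block_of_ne h

theorem coloring_eq_of_mem_block (C : G.Coloring Bool) {v a b : V} (ha : a ∈ hU.block v)
    (hb : b ∈ hU.block v) (hne : a ≠ b) (hnadj : ¬G.Adj a b) : C a = C b := by
  obtain ⟨i, rfl⟩ := ha
  obtain ⟨j, rfl⟩ := hb
  exact (hU.isFourCycle_cycle v).coloring_eq_of_not_adj C hne hnadj

theorem block_eq_of_ne_of_ne [Fintype V] (hcard : Fintype.card V = 12) {a b c v : V}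
    (hab : hU.block a ≠ hU.block b) (hac : hU.block a ≠ hU.block c)
    (hbc : hU.block b ≠ hU.block c) (hva : hU.block v ≠ hU.block a)
    (hvb : hU.block v ≠ hU.block b) : hU.block v = hU.block c := by
  by_contra hvc
  have hcard4 : ∀ w, (hU.block w).ncard = 4 := fun w => by
    rw [block, Set.ncard_range_of_injective (hU.isFourCycle_cycle w).1, Nat.card_eq_fintype_card,
      ZMod.card]
  have := Set.ncard_le_ncard (Set.subset_univ (hU.block a ∪ hU.block b ∪ hU.block c ∪ hU.block v))
  rw [Set.ncard_univ, Nat.card_eq_fintype_card, hcard,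
    Set.ncard_union_eq (Set.disjoint_union_left.2 ⟨Set.disjoint_union_left.2
      ⟨hU.disjoint_block_of_ne (Ne.symm hva), hU.disjoint_block_of_ne (Ne.symm hvb)⟩,
      hU.disjoint_block_of_ne (Ne.symm hvc)⟩),
    Set.ncard_union_eq (Set.disjoint_union_left.2 ⟨hU.disjoint_block_of_ne hac,
      hU.disjoint_block_of_ne hbc⟩),
    Set.ncard_union_eq (hU.disjoint_block_of_ne hab), hcard4, hcard4, hcard4, hcard4] at this
  omega

theorem existsUnique_adj_notMem_block [Fintype V] [DecidableRel G.Adj]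
    (hcubic : G.IsRegularOfDegree 3) (htri : G.CliqueFree 3) (v : V) :
    ∃! y, G.Adj v y ∧ y ∉ hU.block v := by
  classical
  obtain ⟨q, hq, hq0, hblock⟩ : ∃ q, G.IsFourCycle q ∧ q 0 = v ∧ hU.block v = Set.range q :=
    ⟨_, hU.isFourCycle_cycle v, hU.cycle_zero v, rfl⟩
  simp only [hblock]
  have hv1 : G.Adj v (q 1) := hq0 ▸ hq.2 0
  have hv3 : G.Adj v (q 3) := hq0 ▸ (hq.2 3).symm
  have hinside : {y ∈ G.neighborFinset v | y ∈ Set.range q} = {q 1, q 3} := by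
    ext y
    simp only [Finset.mem_filter, mem_neighborFinset, Finset.mem_insert, Finset.mem_singleton]
    constructor
    · rintro ⟨hvy, k, rfl⟩
      obtain rfl | rfl | rfl | rfl := ZMod.eq_zero_or_one_or_two_or_three k
      · exact absurd (hq0 ▸ hvy) G.irrefl
      · exact .inl rfl
      · exact absurd (hq.2 1) (htri.not_adj_of_adj_of_adj hv1 hvy)
      · exact .inr rfl
    · rintro (rfl | rfl)
      exacts [⟨hv1, 1, rfl⟩, ⟨hv3, 3, rfl⟩]
  have hcard : #{y ∈ G.neighborFinset v | y ∉ Set.range q} = 1 := by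
    have := Finset.card_filter_add_card_filter_not (s := G.neighborFinset v) (· ∈ Set.range q)
    rw [hinside, Finset.card_pair (hq.1.ne (by decide)), card_neighborFinset_eq_degree,
      hcubic v] at this
    omega
  obtain ⟨y, hy⟩ := Finset.card_eq_one.1 hcard
  have hmem : ∀ z, (G.Adj v z ∧ z ∉ Set.range q) ↔ z = y := fun z => by
    simpa using congrArg (z ∈ ·) hy
  exact ⟨y, (hmem y).2 rfl, fun z hz => (hmem z).1 hz⟩

variable {E : V → V}

theorem block_apply_ne (hE : ∀ v, G.Adj v (E v) ∧ E v ∉ hU.block v) (v : V) :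
    hU.block (E v) ≠ hU.block v :=
  fun h => (hE v).2 (h ▸ hU.mem_block_self (E v))

theorem involutive [Fintype V] [DecidableRel G.Adj] (hcubic : G.IsRegularOfDegree 3)
    (htri : G.CliqueFree 3) (hE : ∀ v, G.Adj v (E v) ∧ E v ∉ hU.block v) :
    Function.Involutive E := fun v =>
  (hU.existsUnique_adj_notMem_block hcubic htri (E v)).unique (hE (E v))
    ⟨(hE v).1.symm, fun hv => hU.block_apply_ne hE v (hU.block_eq_of_mem hv).symm⟩

/-- If `E x` and `E x'` were adjacent, `x x' (E x') (E x)` would be a second 4-cycle through `x`;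
if not, they would be opposite on their 4-cycle and hence of the same colour. -/
theorem block_apply_ne_block_apply (C : G.Coloring Bool)
    (hE : ∀ v, G.Adj v (E v) ∧ E v ∉ hU.block v) {x x' : V} (hadj : G.Adj x x')
    (hx' : x' ∈ hU.block x) : hU.block (E x) ≠ hU.block (E x') := by
  intro hsame
  have hex : G.Adj x (E x) := (hE x).1
  have hex' : G.Adj x' (E x') := (hE x').1
  have hne : E x ≠ E x' := fun h =>
    C.cliqueFree_three.not_adj_of_adj_of_adj hex hadj (by rw [h]; exact hex'.symm)
  by_cases hadj' : G.Adj (E x) (E x')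
  · have hx_ne : x ≠ E x' := fun h => (hE x').2 (h ▸ hU.block_eq_of_mem hx' ▸ hU.mem_block_self x)
    have hx'_ne : x' ≠ E x := fun h => (hE x).2 (h ▸ hx')
    have hrange := hU.range_eq_block (isFourCycle_of_adj hadj hex' hadj'.symm hex.symm hx_ne hx'_ne)
      ⟨0, rfl⟩
    exact (hE x).2 (hrange ▸ ⟨3, rfl⟩)
  · have hcol := hU.coloring_eq_of_mem_block C (hU.mem_block_self (E x))
      (hsame ▸ hU.mem_block_self (E x')) hne hadj'
    have h1 := C.valid hex
    have h2 := C.valid hadj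
    have h3 := C.valid hex'
    revert hcol h1 h2 h3
    cases C x <;> cases C x' <;> cases C (E x) <;> cases C (E x') <;> simp

variable [Fintype V] [DecidableRel G.Adj]

theorem exists_isFourCycle_apply_opposite (hcard : Fintype.card V = 12)
    (hcubic : G.IsRegularOfDegree 3) (C : G.Coloring Bool)
    (hE : ∀ v, G.Adj v (E v) ∧ E v ∉ hU.block v) {x : ZMod 4 → V} (hx : G.IsFourCycle x) :
    ∃ y, G.IsFourCycle y ∧ y 0 = E (x 0) ∧ y 2 = E (x 2) := by
  have hinv := hU.involutive hcubic C.cliqueFree_three hE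
  have hX : ∀ i, hU.block (x i) = hU.block (x 0) := fun i =>
    hU.block_eq_of_mem (hU.mem_block_of_isFourCycle hx 0 i)
  have h01 := hU.block_apply_ne_block_apply C hE (hx.2 0) (hU.mem_block_of_isFourCycle hx 0 _)
  have h12 := hU.block_apply_ne_block_apply C hE (hx.2 1) (hU.mem_block_of_isFourCycle hx 1 _)
  rw [zero_add] at h01
  rw [one_add_one_eq_two] at h12
  have hB : hU.block (E (x 2)) = hU.block (E (x 0)) :=
    hU.block_eq_of_ne_of_ne hcard (hX 1 ▸ (hU.block_apply_ne hE _).symm)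
      (hU.block_apply_ne hE _).symm (Ne.symm h01) (hX 2 ▸ hU.block_apply_ne hE _) (Ne.symm h12)
  obtain ⟨k, hk⟩ : E (x 2) ∈ hU.block (E (x 0)) := hB ▸ hU.mem_block_self _
  refine ⟨_, hU.isFourCycle_cycle _, hU.cycle_zero _, ?_⟩
  have hk0 : (0 : ZMod 4) ≠ k := by
    rintro rfl
    rw [cycle_zero] at hk
    exact hx.1.ne (by decide : (0 : ZMod 4) ≠ 2) (hinv.injective hk)
  have hnadj : ¬G.Adj (E (x 0)) (E (x 2)) := fun h =>
    hU.block_apply_ne_block_apply C hE h (hB ▸ hU.mem_block_self _) (by rw [hinv, hinv, hX 2])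
  obtain rfl : k = 0 + 2 := by
    by_contra hk2
    have := (hU.isFourCycle_cycle (E (x 0))).adj_of_ne_of_ne_add_two hk0 hk2
    rw [cycle_zero, hk] at this
    exact hnadj this
  rwa [zero_add] at hk

end HasUniqueFourCycles

section Subdivision
variable {α β U W W' : Type*}

theorem ContainsSubdivisionOf.trans_copy {H : SimpleGraph U} {F : SimpleGraph W}
    {G : SimpleGraph W'} (h : F.ContainsSubdivisionOf H) (f : Copy F G) :
    G.ContainsSubdivisionOf H := by
  obtain ⟨E⟩ := h
  refine ⟨{ vmap := ⟨f.toHom ∘ E.vmap, f.injective.comp E.vmap.injective⟩,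
             walk := fun u v h => (E.walk h).map f.toHom,
             walk_isPath := fun u v h => (E.walk_isPath h).map f.injective,
             branch_mem_support := ?_,
             internally_disjoint := ?_ }⟩
  · intro u v h w hw
    rw [Walk.support_map, List.mem_map] at hw
    obtain ⟨s, hs, hfs⟩ := hw
    exact E.branch_mem_support h w (f.injective hfs ▸ hs)
  · intro u v u' v' h h' hne x hx hx'
    rw [Walk.support_map, List.mem_map] at hx hx'
    obtain ⟨s, hs, rfl⟩ := hx
    obtain ⟨s', hs', hss'⟩ := hx'
    obtain rfl := f.injective hss'
    obtain ⟨w, rfl, hw⟩ := E.internally_disjoint h h' hne s' hs hs'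
    exact ⟨w, rfl, hw⟩

theorem containsSubdivisionOf_completeBipartiteGraph_of_paths {G : SimpleGraph W} (l : α → W)
    (r : β → W) (hinj : Function.Injective (Sum.elim l r)) (P : ∀ a b, G.Walk (l a) (r b))
    (hpath : ∀ a b, (P a b).IsPath)
    (hbranch : ∀ a b w, Sum.elim l r w ∈ (P a b).support → w = .inl a ∨ w = .inr b)
    (hdisj : ∀ a b a' b', (a, b) ≠ (a', b') → ∀ x ∈ (P a b).support, x ∈ (P a' b').support →
      (x = l a ∧ a = a') ∨ (x = r b ∧ b = b')) :
    G.ContainsSubdivisionOf (completeBipartiteGraph α β) := by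
  let walk : ∀ ⦃u v⦄, (completeBipartiteGraph α β).Adj u v →
      G.Walk (Sum.elim l r u) (Sum.elim l r v)
    | .inl a, .inr b, _ => P a b
    | .inr b, .inl a, _ => (P a b).reverse
    | .inl _, .inl _, h => absurd h (by simp)
    | .inr _, .inr _, h => absurd h (by simp)
  have hwalk : ∀ u v (h : (completeBipartiteGraph α β).Adj u v), ∃ a b,
      ({u, v} : Set (α ⊕ β)) = {.inl a, .inr b} ∧ (walk h).support.Perm (P a b).support := by
    rintro (a | b) (a' | b') h
    · simp at h
    · exact ⟨a, b', rfl, .refl _⟩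
    · refine ⟨a', b, Set.pair_comm _ _, ?_⟩
      show (P a' b).reverse.support.Perm _
      simp
    · simp at h
  refine ⟨{ vmap := ⟨_, hinj⟩,
             walk := walk,
             walk_isPath := fun u v h => ?_,
             branch_mem_support := fun u v h w hw => ?_,
             internally_disjoint := fun u v u' v' h h' hne x hx hx' => ?_ }⟩
  · obtain ⟨a, b, -, hperm⟩ := hwalk u v h
    exact Walk.IsPath.mk' (hperm.nodup_iff.2 (hpath a b).support_nodup)
  · obtain ⟨a, b, huv, hperm⟩ := hwalk u v h
    have : w ∈ ({u, v} : Set (α ⊕ β)) := by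
      rw [huv]
      simpa using hbranch a b w (hperm.mem_iff.1 hw)
    simpa using this
  · obtain ⟨a, b, huv, hperm⟩ := hwalk u v h
    obtain ⟨a', b', huv', hperm'⟩ := hwalk u' v' h'
    rw [huv, huv'] at hne ⊢
    obtain ⟨rfl, rfl⟩ | ⟨rfl, rfl⟩ := hdisj a b a' b' (by rintro ⟨⟩; exact hne rfl) x
      (hperm.mem_iff.1 hx) (hperm'.mem_iff.1 hx')
    · exact ⟨.inl a, rfl, by simp⟩
    · exact ⟨.inr b, rfl, by simp⟩

end Subdivision

def franklinCrossEdges : List ((Fin 3 × ZMod 4) × (Fin 3 × ZMod 4)) :=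
  [((0, 0), (1, 0)), ((0, 2), (1, 2)), ((0, 1), (2, 0)), ((0, 3), (2, 2)), ((1, 1), (2, 1))]

/-- The Franklin graph with the edge `(1, 3) - (2, 3)` removed: three 4-cycles `(i, ·)` joined by
five edges. -/
def franklinCore : SimpleGraph (Fin 3 × ZMod 4) := SimpleGraph.fromRel fun a b =>
  (a.1 = b.1 ∧ b.2 = a.2 + 1) ∨ (a, b) ∈ franklinCrossEdges

instance : DecidableRel franklinCore.Adj := fun _ _ => inferInstanceAs (Decidable (_ ∧ _))

namespace franklinCore

def left : Fin 3 → Fin 3 × ZMod 4 := ![(0, 0), (0, 2), (2, 1)]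

def right : Fin 3 → Fin 3 × ZMod 4 := ![(0, 1), (0, 3), (1, 1)]

open Walk in
def path : ∀ i j : Fin 3, franklinCore.Walk (left i) (right j)
  | 0, 0 => cons (by decide) nil
  | 0, 1 => cons (by decide) nil
  | 0, 2 => cons (v := (1, 0)) (by decide) (cons (by decide) nil)
  | 1, 0 => cons (by decide) nil
  | 1, 1 => cons (by decide) nil
  | 1, 2 => cons (v := (1, 2)) (by decide) (cons (by decide) nil)
  | 2, 0 => cons (v := (2, 0)) (by decide) (cons (by decide) nil)
  | 2, 1 => cons (v := (2, 2)) (by decide) (cons (by decide) nil)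
  | 2, 2 => cons (by decide) nil

theorem containsSubdivisionOf_K33 :
    franklinCore.ContainsSubdivisionOf (completeBipartiteGraph (Fin 3) (Fin 3)) :=
  containsSubdivisionOf_completeBipartiteGraph_of_paths left right (by decide) path
    (fun i j => Walk.IsPath.mk' (by revert i j; decide)) (by decide) (by decide)

end franklinCore

theorem containsSubdivisionOf_K33_of_isFourCycle {x y z : ZMod 4 → V} (hx : G.IsFourCycle x)
    (hy : G.IsFourCycle y) (hz : G.IsFourCycle z) (hxy : Disjoint (Set.range x) (Set.range y))
    (hxz : Disjoint (Set.range x) (Set.range z)) (hyz : Disjoint (Set.range y) (Set.range z))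
    (h00 : G.Adj (x 0) (y 0)) (h22 : G.Adj (x 2) (y 2)) (h10 : G.Adj (x 1) (z 0))
    (h32 : G.Adj (x 3) (z 2)) (h11 : G.Adj (y 1) (z 1)) :
    G.ContainsSubdivisionOf (completeBipartiteGraph (Fin 3) (Fin 3)) := by
  let f : Fin 3 × ZMod 4 → V := fun a => ![x, y, z] a.1 a.2
  have hf : Function.Injective f := by
    rintro ⟨i, k⟩ ⟨j, l⟩ h
    have fin3 : ∀ i : Fin 3, i = 0 ∨ i = 1 ∨ i = 2 := by decide
    obtain rfl | rfl | rfl := fin3 i <;> obtain rfl | rfl | rfl := fin3 j <;>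
      simp only [f, Matrix.cons_val_zero, Matrix.cons_val_one, Matrix.cons_val_two] at h
    · rw [hx.1 h]
    · exact absurd h (hxy.ne_of_mem ⟨k, rfl⟩ ⟨l, rfl⟩)
    · exact absurd h (hxz.ne_of_mem ⟨k, rfl⟩ ⟨l, rfl⟩)
    · exact absurd h.symm (hxy.ne_of_mem ⟨l, rfl⟩ ⟨k, rfl⟩)
    · rw [hy.1 h]
    · exact absurd h (hyz.ne_of_mem ⟨k, rfl⟩ ⟨l, rfl⟩)
    · exact absurd h.symm (hxz.ne_of_mem ⟨l, rfl⟩ ⟨k, rfl⟩)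
    · exact absurd h.symm (hyz.ne_of_mem ⟨l, rfl⟩ ⟨k, rfl⟩)
    · rw [hz.1 h]
  have hrel : ∀ a b, (a.1 = b.1 ∧ b.2 = a.2 + 1) ∨ (a, b) ∈ franklinCrossEdges →
      G.Adj (f a) (f b) := by
    rintro ⟨i, k⟩ ⟨j, l⟩ (⟨rfl, rfl⟩ | h)
    · fin_cases i
      exacts [hx.2 k, hy.2 k, hz.2 k]
    · simp only [franklinCrossEdges, List.mem_cons, Prod.mk.injEq, List.not_mem_nil,
        or_false] at h
      obtain ⟨⟨rfl, rfl⟩, rfl, rfl⟩ | ⟨⟨rfl, rfl⟩, rfl, rfl⟩ | ⟨⟨rfl, rfl⟩, rfl, rfl⟩ |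
        ⟨⟨rfl, rfl⟩, rfl, rfl⟩ | ⟨⟨rfl, rfl⟩, rfl, rfl⟩ := h
      exacts [h00, h22, h10, h32, h11]
  exact franklinCore.containsSubdivisionOf_K33.trans_copy
    ⟨⟨f, fun {a b} ⟨_, h⟩ => h.elim (hrel a b) fun h => (hrel b a h).symm⟩, hf⟩

theorem HasUniqueFourCycles.containsSubdivisionOf_K33 (hU : G.HasUniqueFourCycles) [Fintype V]
    [DecidableRel G.Adj] (hcubic : G.IsRegularOfDegree 3) (C : G.Coloring Bool)
    (hcard : Fintype.card V = 12) :
    G.ContainsSubdivisionOf (completeBipartiteGraph (Fin 3) (Fin 3)) := by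
  choose E hE using fun v => (hU.existsUnique_adj_notMem_block hcubic C.cliqueFree_three v).exists
  have hinv := hU.involutive hcubic C.cliqueFree_three hE
  obtain ⟨v⟩ : Nonempty V := Fintype.card_pos_iff.1 (by omega)
  have hx := hU.isFourCycle_cycle v
  set x := hU.cycle v
  obtain ⟨y, hy, hy0, hy2⟩ := hU.exists_isFourCycle_apply_opposite hcard hcubic C hE hx
  obtain ⟨z, hz, hz0, hz2⟩ := hU.exists_isFourCycle_apply_opposite hcard hcubic C hE (hx.comp_add 1)
  simp only [zero_add, show (2 : ZMod 4) + 1 = 3 by decide] at hz0 hz2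
  have hXY : hU.block (x 0) ≠ hU.block (y 0) := hy0 ▸ (hU.block_apply_ne hE _).symm
  have hXZ : hU.block (x 0) ≠ hU.block (z 0) := by
    rw [← hU.block_eq_of_mem (hU.mem_block_of_isFourCycle hx 0 1), hz0]
    exact (hU.block_apply_ne hE _).symm
  have hYZ : hU.block (y 0) ≠ hU.block (z 0) := by
    rw [hy0, hz0]
    exact hU.block_apply_ne_block_apply C hE (hx.2 0) (hU.mem_block_of_isFourCycle hx 0 _)
  have hEy1 : hU.block (E (y 1)) = hU.block (z 0) := by
    refine hU.block_eq_of_ne_of_ne hcard hXY hXZ hYZ (fun h => ?_) ?_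
    · refine hU.block_apply_ne_block_apply C hE (hy.2 0) (hU.mem_block_of_isFourCycle hy 0 _) ?_
      rw [zero_add, h, hy0, hinv]
    · rw [← hU.block_eq_of_mem (hU.mem_block_of_isFourCycle hy 0 1)]
      exact hU.block_apply_ne hE _
  have hXY' := hU.disjoint_range_of_block_ne hx hy hXY
  obtain ⟨k, hk⟩ : E (y 1) ∈ Set.range z :=
    hU.range_eq_block hz ⟨0, rfl⟩ ▸ hEy1 ▸ hU.mem_block_self _
  have h1k : G.Adj (y 1) (z k) := hk ▸ (hE _).1
  -- `E` is injective, so `E (y 1)` is neither `z 0 = E (x 1)` nor `z 2 = E (x 3)`; the case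
  -- `E (y 1) = z 3` is reduced to `z 1` by reversing `z`.
  obtain rfl | rfl | rfl | rfl := ZMod.eq_zero_or_one_or_two_or_three k
  · rw [hz0] at hk
    exact absurd (hinv.injective hk) (hXY'.ne_of_mem ⟨1, rfl⟩ ⟨1, rfl⟩)
  · exact containsSubdivisionOf_K33_of_isFourCycle hx hy hz hXY'
      (hU.disjoint_range_of_block_ne hx hz hXZ) (hU.disjoint_range_of_block_ne hy hz hYZ)
      (hy0 ▸ (hE _).1) (hy2 ▸ (hE _).1) (hz0 ▸ (hE _).1) (hz2 ▸ (hE _).1) h1k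
  · rw [hz2] at hk
    exact absurd (hinv.injective hk) (hXY'.ne_of_mem ⟨3, rfl⟩ ⟨1, rfl⟩)
  · exact containsSubdivisionOf_K33_of_isFourCycle hx hy hz.comp_neg hXY'
      (hU.disjoint_range_of_block_ne hx hz.comp_neg (by simpa using hXZ))
      (hU.disjoint_range_of_block_ne hy hz.comp_neg (by simpa using hYZ))
      (hy0 ▸ (hE _).1) (hy2 ▸ (hE _).1) (by simpa [hz0] using (hE _).1)
      (by rw [show (-2 : ZMod 4) = 2 by decide, hz2]; exact (hE _).1) h1k

theorem IsSquco.ncard_square_neighborSet_add [Fintype V] [DecidableRel G.Adj] {d : ℕ}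
    (hsq : G.IsSquco) (hreg : G.IsRegularOfDegree d) (v : V) :
    (G.square.neighborSet v).ncard + d + 1 = Fintype.card V := by
  classical
  obtain ⟨φ⟩ := hsq
  have hcompl : (G.square.neighborSet v).ncard = Gᶜ.degree (φ v) := by
    rw [← card_neighborSet_eq_degree, ← Nat.card_eq_fintype_card, ← Nat.card_coe_set_eq]
    exact Nat.card_congr (φ.mapNeighborSet v)
  have hlt := G.degree_lt_card_verts (φ v)
  rw [hcompl, degree_compl, hreg (φ v)]
  rw [hreg (φ v)] at hlt
  omega

theorem IsBipartitionOf.nonempty_coloring {A B : Set V} (h : G.IsBipartitionOf A B) :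
    Nonempty (G.Coloring Bool) := by
  classical
  refine ⟨Coloring.mk (fun v => decide (v ∈ A)) fun {u v} huv => ?_⟩
  rcases h.2 huv with ⟨hu, hv⟩ | ⟨hu, hv⟩
  · simp [hu, (h.1 v).1.mt (not_not.2 hv)]
  · simp [hv, (h.1 u).1.mt (not_not.2 hu)]

end SimpleGraph

/-- There is no cubic bipartite planar square-complementary graph on 12
vertices. -/
theorem no_cubic_bipartite_planar_squco_on_12 {V : Type*} [Fintype V]
    (G : SimpleGraph V) [DecidableRel G.Adj] (hcard : Fintype.card V = 12)
    (hcubic : G.IsRegularOfDegree 3) (hbip : ∃ A B, G.IsBipartitionOf A B)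
    (hplanar : G.IsPlanar) : ¬ G.IsSquco := by
  intro hsq
  classical
  obtain ⟨A, B, hAB⟩ := hbip
  obtain ⟨C⟩ := hAB.nonempty_coloring
  have hU : G.HasUniqueFourCycles :=
    hasUniqueFourCycles_of_ncard_square_neighborSet hcubic C.cliqueFree_three fun v => by
      have := hsq.ncard_square_neighborSet_add hcubic v
      omega
  exact hplanar.2 (hU.containsSubdivisionOf_K33 hcubic C hcard)
end
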